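/- There exists at least one steady state of the two-population NNLIF system with refractory states, i.e., there exists a pair (N_E, N_I) with 0 < N_E < 1/τ_E and 0 < N_I < 1/τ_I satisfying N_E·(τ_E + I_1(N_E,N_I)) = 1 and N_I·(τ_I + I_2(N_E,N_I)) = 1. (Indeed, with N_I(N_E) the unique solution of the second equation for each N_E ≥ 0, the function F(N_E) := N_E(τ_E + I_1(N_E,N_I(N_E))) is continuous on [0,1/τ_E], with F(0)=0 and F(1/τ_E) > 1, so F takes the value 1 on (0,1/τ_E).) -/

import Mathlib

/-
For each `N_E` the second equation has a unique solution `N_I(N_E)`: its left-hand side vanishes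
at `N_I = 0`, exceeds `1` at `N_I = 1/τ_I` because `I₂ > 0`, and is strictly increasing in `N_I`,
since `I₂` is a nondecreasing function of `-V₀^I`. Uniqueness makes `N_I(N_E)` continuous, and the
intermediate value theorem applied to `N_E ↦ N_E (τ_E + I₁(N_E, N_I(N_E)))` on `[0, 1/τ_E]`
produces the steady state.
-/

/-- K(w_R, w_F) := ∫_0^∞ (e^{-s²/2}/s)(e^{s·w_F} − e^{s·w_R}) ds (Lebesgue integral on (0,∞)). -/
noncomputable def K (wR wF : ℝ) : ℝ :=
  ∫ s in Set.Ioi (0 : ℝ), Real.exp (-s ^ 2 / 2) / s * (Real.exp (s * wF) - Real.exp (s * wR))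

/-- I₁(N_E,N_I) with V_0^E(N_E,N_I) := b_E^E N_E − b_I^E N_I + (b_E^E − b_E^E) ν_{E,ext}. -/
noncomputable def I1 (VR VF bEE bIE aE ν NE NI : ℝ) : ℝ :=
  K ((VR - (bEE * NE - bIE * NI + (bEE - bEE) * ν)) / Real.sqrt aE)
    ((VF - (bEE * NE - bIE * NI + (bEE - bEE) * ν)) / Real.sqrt aE)

/-- I₂(N_E,N_I) with V_0^I(N_E,N_I) := b_E^I N_E − b_I^I N_I + (b_E^I − b_E^E) ν_{E,ext}. -/
noncomputable def I2 (VR VF bEE bEI bII aI ν NE NI : ℝ) : ℝ :=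
  K ((VR - (bEI * NE - bII * NI + (bEI - bEE) * ν)) / Real.sqrt aI)
    ((VF - (bEI * NE - bII * NI + (bEI - bEE) * ν)) / Real.sqrt aI)

open MeasureTheory Set Real Filter Function

noncomputable def kIntegrand (wR wF s : ℝ) : ℝ :=
  exp (-s ^ 2 / 2) / s * (exp (s * wF) - exp (s * wR))

lemma K_eq_integral_kIntegrand (wR wF : ℝ) : K wR wF = ∫ s in Ioi 0, kIntegrand wR wF s := rfl

lemma kIntegrand_add_eq (t d s : ℝ) :
    kIntegrand t (t + d) s = (exp (s * d) - 1) / s * exp (s * t - s ^ 2 / 2) := by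
  simp only [kIntegrand, mul_add, sub_eq_add_neg, exp_add, neg_div]
  ring

lemma kIntegrand_add_nonneg {t d s : ℝ} (hd : 0 ≤ d) (hs : 0 < s) :
    0 ≤ kIntegrand t (t + d) s := by
  rw [kIntegrand_add_eq]
  have := sub_nonneg.2 (one_le_exp (mul_nonneg hs.le hd))
  positivity

lemma kIntegrand_add_le {t d s : ℝ} (hs : 0 < s) :
    kIntegrand t (t + d) s ≤ d * exp (s * (t + d) - s ^ 2 / 2) := by
  -- `e^x - 1 ≤ x e^x`, from `1 - x ≤ e^{-x}`
  have hexp : exp (s * d) - 1 ≤ s * d * exp (s * d) := by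
    have h := mul_le_mul_of_nonneg_right (add_one_le_exp (-(s * d))) (exp_pos (s * d)).le
    rw [← exp_add, neg_add_cancel, exp_zero] at h
    linarith
  calc kIntegrand t (t + d) s
      ≤ s * d * exp (s * d) / s * exp (s * t - s ^ 2 / 2) := by
        rw [kIntegrand_add_eq]; gcongr
    _ = d * exp (s * (t + d) - s ^ 2 / 2) := by
        rw [mul_add, add_comm (s * t), add_sub_assoc, exp_add]
        field_simp

lemma integrable_exp_mul_sub_sq_div_two (c : ℝ) :
    Integrable fun s : ℝ => exp (s * c - s ^ 2 / 2) := by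
  refine (((integrable_exp_neg_mul_sq (b := 1 / 2) (by norm_num)).comp_sub_right c).const_mul
    (exp (c ^ 2 / 2))).congr (Eventually.of_forall fun s => ?_)
  simp only [← exp_add]
  ring_nf

lemma continuousOn_kIntegrand (wR wF : ℝ) : ContinuousOn (kIntegrand wR wF) (Ioi 0) :=
  ((continuous_exp.comp (by fun_prop)).continuousOn.div continuousOn_id
    fun _ hs => ne_of_gt hs).mul (by fun_prop)

lemma integrableOn_kIntegrand_add (t : ℝ) {d : ℝ} (hd : 0 ≤ d) :
    IntegrableOn (kIntegrand t (t + d)) (Ioi 0) := by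
  refine ((integrable_exp_mul_sub_sq_div_two (t + d)).const_mul d).integrableOn.mono'
    ((continuousOn_kIntegrand _ _).aestronglyMeasurable measurableSet_Ioi) ?_
  refine (ae_restrict_iff' measurableSet_Ioi).2 (Eventually.of_forall fun s hs => ?_)
  rw [norm_of_nonneg (kIntegrand_add_nonneg hd hs)]
  exact kIntegrand_add_le hs

lemma K_add_pos (t : ℝ) {d : ℝ} (hd : 0 < d) : 0 < K t (t + d) := by
  have hpos : ∀ s ∈ Ioi (0 : ℝ), 0 < kIntegrand t (t + d) s := fun s (hs : 0 < s) => by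
    rw [kIntegrand_add_eq]
    have := sub_pos.2 (one_lt_exp_iff.2 (mul_pos hs hd))
    positivity
  rw [K_eq_integral_kIntegrand, setIntegral_pos_iff_support_of_nonneg_ae
    ((ae_restrict_iff' measurableSet_Ioi).2 (Eventually.of_forall fun s hs => (hpos s hs).le))
    (integrableOn_kIntegrand_add t hd.le),
    inter_eq_right.2 fun s hs => mem_support.2 (hpos s hs).ne', volume_Ioi]
  exact ENNReal.zero_lt_top

lemma monotone_K_add {d : ℝ} (hd : 0 ≤ d) : Monotone fun t => K t (t + d) := by
  intro t₁ t₂ ht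
  simp only [K_eq_integral_kIntegrand]
  refine setIntegral_mono_on (integrableOn_kIntegrand_add t₁ hd)
    (integrableOn_kIntegrand_add t₂ hd) measurableSet_Ioi fun s (hs : 0 < s) => ?_
  simp only [kIntegrand_add_eq]
  have := sub_nonneg.2 (one_le_exp (mul_nonneg hs.le hd))
  gcongr

lemma continuous_K_add {d : ℝ} (hd : 0 ≤ d) : Continuous fun t => K t (t + d) := by
  simp only [K_eq_integral_kIntegrand]
  refine continuous_iff_continuousAt.2 fun t₀ => ?_
  refine continuousAt_of_dominated (bound := fun s => d * exp (s * (t₀ + 1 + d) - s ^ 2 / 2))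
    (Eventually.of_forall fun t =>
      (continuousOn_kIntegrand t (t + d)).aestronglyMeasurable measurableSet_Ioi) ?_
    ((integrable_exp_mul_sub_sq_div_two _).const_mul d).integrableOn ?_
  · filter_upwards [Iio_mem_nhds (lt_add_one t₀)] with t (ht : t < t₀ + 1)
    refine (ae_restrict_iff' measurableSet_Ioi).2 (Eventually.of_forall fun s (hs : 0 < s) => ?_)
    rw [norm_of_nonneg (kIntegrand_add_nonneg hd hs)]
    refine (kIntegrand_add_le hs).trans ?_
    gcongr
  · refine (ae_restrict_iff' measurableSet_Ioi).2 (Eventually.of_forall fun s (hs : 0 < s) => ?_)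
    simp only [kIntegrand_add_eq]
    fun_prop

/-- `I₁` and `I₂` are both this function of the mean drift `V₀`. -/
noncomputable def IV (VR VF a V₀ : ℝ) : ℝ :=
  K ((VR - V₀) / √a) ((VF - V₀) / √a)

lemma I1_eq_IV (VR VF bEE bIE aE ν NE NI : ℝ) :
    I1 VR VF bEE bIE aE ν NE NI = IV VR VF aE (bEE * NE - bIE * NI + (bEE - bEE) * ν) := rfl

lemma I2_eq_IV (VR VF bEE bEI bII aI ν NE NI : ℝ) :
    I2 VR VF bEE bEI bII aI ν NE NI = IV VR VF aI (bEI * NE - bII * NI + (bEI - bEE) * ν) := rfl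

lemma IV_eq_K_add (VR VF a V₀ : ℝ) :
    IV VR VF a V₀ = K ((VR - V₀) / √a) ((VR - V₀) / √a + (VF - VR) / √a) := by
  rw [IV]
  congr 1
  ring

lemma IV_pos {VR VF a : ℝ} (hV : VR < VF) (ha : 0 < a) (V₀ : ℝ) : 0 < IV VR VF a V₀ := by
  rw [IV_eq_K_add]
  exact K_add_pos _ (div_pos (sub_pos.2 hV) (sqrt_pos.2 ha))

lemma continuous_IV {VR VF : ℝ} (hV : VR ≤ VF) (a : ℝ) : Continuous (IV VR VF a) := by
  simp only [funext (IV_eq_K_add VR VF a)]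
  exact (continuous_K_add (div_nonneg (sub_nonneg.2 hV) (sqrt_nonneg a))).comp (by fun_prop)

lemma antitone_IV {VR VF : ℝ} (hV : VR ≤ VF) (a : ℝ) : Antitone (IV VR VF a) := by
  simp only [funext (IV_eq_K_add VR VF a)]
  exact (monotone_K_add (div_nonneg (sub_nonneg.2 hV) (sqrt_nonneg a))).comp_antitone
    fun V₁ V₂ h => div_le_div_of_nonneg_right (sub_le_sub_left h VR) (sqrt_nonneg a)

lemma exists_mem_Ioo_mul_add_eq_one {τ : ℝ} (hτ : 0 < τ) {φ : ℝ → ℝ}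
    (hφ : ContinuousOn φ (Icc 0 (1 / τ))) (hpos : 0 < φ (1 / τ)) :
    ∃ x ∈ Ioo 0 (1 / τ), x * (τ + φ x) = 1 := by
  refine intermediate_value_Ioo (by positivity) (continuousOn_id.mul (continuousOn_const.add hφ))
    ⟨by simp, ?_⟩
  show 1 < 1 / τ * (τ + φ (1 / τ))
  rw [mul_add, one_div_mul_cancel hτ.ne']
  exact lt_add_of_pos_right 1 (by positivity)

lemma strictMonoOn_mul_add {τ : ℝ} (hτ : 0 < τ) {φ : ℝ → ℝ} (hφ : Monotone φ)
    (hnonneg : ∀ x, 0 ≤ φ x) : StrictMonoOn (fun x => x * (τ + φ x)) (Ici 0) :=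
  fun x (hx : 0 ≤ x) y _ hxy =>
    calc x * (τ + φ x) ≤ x * (τ + φ y) := by gcongr; exact hφ hxy.le
      _ < y * (τ + φ y) := by gcongr; linarith [hnonneg y]

lemma continuous_of_strictMonoOn_of_apply_eq {X : Type*} [TopologicalSpace X] {g : X → ℝ → ℝ}
    (hg : Continuous (uncurry g)) (hmono : ∀ x, StrictMonoOn (g x) (Ici 0)) {N : X → ℝ} {c : ℝ}
    (hNpos : ∀ x, 0 < N x) (hN : ∀ x, g x (N x) = c) : Continuous N := by
  refine continuous_iff_continuousAt.2 fun x₀ => tendsto_order.2 ⟨fun a ha => ?_, fun b hb => ?_⟩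
  · have ha' : max a 0 < N x₀ := max_lt ha (hNpos x₀)
    have hlt : g x₀ (max a 0) < c :=
      hN x₀ ▸ hmono x₀ (le_max_right a 0) (hNpos x₀).le ha'
    filter_upwards [((hg.uncurry_right _).tendsto x₀).eventually (gt_mem_nhds hlt)] with x hx
    rw [← hN x, (hmono x).lt_iff_lt (le_max_right a 0) (hNpos x).le] at hx
    exact (le_max_left a 0).trans_lt hx
  · have hb0 : (0 : ℝ) ≤ b := ((hNpos x₀).trans hb).le
    have hlt : c < g x₀ b := hN x₀ ▸ hmono x₀ (hNpos x₀).le hb0 hb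
    filter_upwards [((hg.uncurry_right _).tendsto x₀).eventually (lt_mem_nhds hlt)] with x hx
    rwa [← hN x, (hmono x).lt_iff_lt (hNpos x).le hb0] at hx

lemma exists_continuous_solution_I2 {VR VF bEE bEI bII τI aI ν : ℝ} (hV : VR < VF)
    (hbII : 0 ≤ bII) (hτI : 0 < τI) (haI : 0 < aI) :
    ∃ N : ℝ → ℝ, Continuous N ∧ ∀ NE, N NE ∈ Ioo 0 (1 / τI) ∧
      N NE * (τI + I2 VR VF bEE bEI bII aI ν NE (N NE)) = 1 := by
  have hcont : Continuous fun p : ℝ × ℝ => I2 VR VF bEE bEI bII aI ν p.1 p.2 := by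
    simp only [I2_eq_IV]
    exact (continuous_IV hV.le aI).comp (by fun_prop)
  have hmono (NE : ℝ) : Monotone (I2 VR VF bEE bEI bII aI ν NE) := fun NI₁ NI₂ h => by
    simp only [I2_eq_IV]
    exact antitone_IV hV.le aI (by gcongr)
  have hpos (NE NI : ℝ) : 0 < I2 VR VF bEE bEI bII aI ν NE NI := by
    rw [I2_eq_IV]
    exact IV_pos hV haI _
  have hsol (NE : ℝ) : ∃ NI ∈ Ioo 0 (1 / τI), NI * (τI + I2 VR VF bEE bEI bII aI ν NE NI) = 1 :=
    exists_mem_Ioo_mul_add_eq_one hτI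
      (hcont.comp (continuous_const.prodMk continuous_id)).continuousOn (hpos NE _)
  choose N hNmem hN using hsol
  refine ⟨N, continuous_of_strictMonoOn_of_apply_eq
    (g := fun NE NI => NI * (τI + I2 VR VF bEE bEI bII aI ν NE NI))
    (continuous_snd.mul (continuous_const.add hcont))
    (fun NE => strictMonoOn_mul_add hτI (hmono NE) fun NI => (hpos NE NI).le)
    (fun NE => (hNmem NE).1) hN, fun NE => ⟨hNmem NE, hN NE⟩⟩

theorem exists_steady_state_general (VR VF bEE bIE bEI bII τE τI aE aI ν : ℝ)
    (hV : VR < VF) (hbII : 0 < bII)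
    (hτE : 0 < τE) (hτI : 0 < τI) (haE : 0 < aE) (haI : 0 < aI) :
    ∃ NE NI : ℝ, NE ∈ Set.Ioo 0 (1 / τE) ∧ NI ∈ Set.Ioo 0 (1 / τI) ∧
      NE * (τE + I1 VR VF bEE bIE aE ν NE NI) = 1 ∧
      NI * (τI + I2 VR VF bEE bEI bII aI ν NE NI) = 1 := by
  obtain ⟨N, hNcont, hN⟩ :=
    exists_continuous_solution_I2 (bEE := bEE) (bEI := bEI) (ν := ν) hV hbII.le hτI haI
  have hI1 : Continuous fun NE => I1 VR VF bEE bIE aE ν NE (N NE) := by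
    simp only [I1_eq_IV]
    exact (continuous_IV hV.le aE).comp (by fun_prop)
  have hpos (NE NI : ℝ) : 0 < I1 VR VF bEE bIE aE ν NE NI := by
    rw [I1_eq_IV]
    exact IV_pos hV haE _
  obtain ⟨NE, hNE, hsol⟩ := exists_mem_Ioo_mul_add_eq_one hτE hI1.continuousOn (hpos _ _)
  exact ⟨NE, N NE, hNE, (hN NE).1, hsol, (hN NE).2⟩

theorem exists_steady_state (VR VF bEE bIE bEI bII τE τI aE aI ν : ℝ)
    (hV : VR < VF) (hbEE : 0 < bEE) (hbIE : 0 < bIE) (hbEI : 0 < bEI) (hbII : 0 < bII)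
    (hτE : 0 < τE) (hτI : 0 < τI) (haE : 0 < aE) (haI : 0 < aI) (hν : 0 ≤ ν) :
    ∃ NE NI : ℝ, NE ∈ Set.Ioo 0 (1 / τE) ∧ NI ∈ Set.Ioo 0 (1 / τI) ∧
      NE * (τE + I1 VR VF bEE bIE aE ν NE NI) = 1 ∧
      NI * (τI + I2 VR VF bEE bEI bII aI ν NE NI) = 1 :=
  exists_steady_state_general VR VF bEE bIE bEI bII τE τI aE aI ν hV hbII hτE hτI haE haI
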